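/- arXiv:2109.07863 — 7 statements merged into one kernel-verified Lean document; each statement's English description precedes it below -/
import Mathlib

section
/- Possibly-Infinite Refinement: Let Cfg and A be types, let step be a binary relation → on Cfg, let Vev be a relation relating a finite trace over Cfg, a finite trace over A, an element of Cfg, and an element of A, and let ξ be a binary relation between finite traces over Cfg and finite traces over A. If continuedsim_ξ(τ, κ) holds and validinfexec(τ, σ) holds, then there exists a possibly-infinite trace μ over A such that continuedinfsim_ζ(τ, κ, σ, μ) holds, where ζ := continuedsim_ξ. -/
/-- A finite trace over `X`: a nonempty finite sequence, given by a head and a tail. -/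
structure FinTrace (X : Type) where
  head : X
  tail : List X

/-- Last element of a finite trace. -/
def FinTrace.lst {X : Type} (t : FinTrace X) : X :=
  t.tail.getLast?.getD t.head

/-- Extension of a finite trace with an element appended at the end. -/
def FinTrace.ext {X : Type} (t : FinTrace X) (a : X) : FinTrace X :=
  ⟨t.head, t.tail ++ [a]⟩

/-- Valid finite execution traces: singleton traces are valid, and a valid trace may be
extended by a configuration reachable by one step from its last element. -/
inductive ValidExec {Cfg : Type} (step : Cfg → Cfg → Prop) : FinTrace Cfg → Prop where
  | singleton (c : Cfg) : ValidExec step ⟨c, []⟩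
  | extend (τ : FinTrace Cfg) (c : Cfg) :
      ValidExec step τ → step τ.lst c → ValidExec step (τ.ext c)

/-- `ValidInfExec step τ σ`: the greatest predicate such that either `τ` is a valid
execution and `σ` is empty, or `σ = c :: σ'` with `τ` valid, `last τ → c`, and the predicate
holds for `(τ :+ c, σ')`.  (Greatest fixpoint via its impredicative encoding.) -/
def ValidInfExec {Cfg : Type} (step : Cfg → Cfg → Prop)
    (τ : FinTrace Cfg) (σ : Stream'.Seq Cfg) : Prop :=
  ∃ P : FinTrace Cfg → Stream'.Seq Cfg → Prop,
    P τ σ ∧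
    ∀ τ' σ', P τ' σ' →
      (ValidExec step τ' ∧ σ' = Stream'.Seq.nil) ∨
      ∃ c σ'', σ' = Stream'.Seq.cons c σ'' ∧ ValidExec step τ' ∧ step τ'.lst c ∧
        P (τ'.ext c) σ''

/-- `ContinuedSim step Vev ξ τ κ`: the greatest binary relation such that `ξ τ κ` holds and
for every step `last τ → c` there is `δ` with `Vev τ κ c δ` and the relation holds for
`(τ :+ c, κ :+ δ)`.  (Greatest fixpoint via its impredicative encoding.) -/
def ContinuedSim {Cfg A : Type} (step : Cfg → Cfg → Prop)
    (Vev : FinTrace Cfg → FinTrace A → Cfg → A → Prop)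
    (ξ : FinTrace Cfg → FinTrace A → Prop)
    (τ : FinTrace Cfg) (κ : FinTrace A) : Prop :=
  ∃ P : FinTrace Cfg → FinTrace A → Prop,
    P τ κ ∧
    ∀ τ' κ', P τ' κ' →
      ξ τ' κ' ∧ ∀ c, step τ'.lst c → ∃ δ, Vev τ' κ' c δ ∧ P (τ'.ext c) (κ'.ext δ)

/-- `ContinuedInfSim ζ τ κ σ μ`: the greatest predicate such that either `ζ τ κ` holds and
`σ` and `μ` are both empty, or `σ = c :: σ'`, `μ = δ :: μ'`, `ζ (τ :+ c) (κ :+ δ)` holds and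
the predicate holds for `(τ :+ c, κ :+ δ, σ', μ')`. -/
def ContinuedInfSim {Cfg A : Type} (ζ : FinTrace Cfg → FinTrace A → Prop)
    (τ : FinTrace Cfg) (κ : FinTrace A)
    (σ : Stream'.Seq Cfg) (μ : Stream'.Seq A) : Prop :=
  ∃ P : FinTrace Cfg → FinTrace A → Stream'.Seq Cfg → Stream'.Seq A → Prop,
    P τ κ σ μ ∧
    ∀ τ' κ' σ' μ', P τ' κ' σ' μ' →
      (ζ τ' κ' ∧ σ' = Stream'.Seq.nil ∧ μ' = Stream'.Seq.nil) ∨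
      ∃ c δ σ'' μ'', σ' = Stream'.Seq.cons c σ'' ∧ μ' = Stream'.Seq.cons δ μ'' ∧
        ζ (τ'.ext c) (κ'.ext δ) ∧ P (τ'.ext c) (κ'.ext δ) σ'' μ''

section Refinement

variable {Cfg A : Type} {step : Cfg → Cfg → Prop}
  {Vev : FinTrace Cfg → FinTrace A → Cfg → A → Prop} {ξ : FinTrace Cfg → FinTrace A → Prop}

theorem ContinuedSim.unfold {τ : FinTrace Cfg} {κ : FinTrace A}
    (h : ContinuedSim step Vev ξ τ κ) :
    ξ τ κ ∧ ∀ c, step τ.lst c →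
      ∃ δ, Vev τ κ c δ ∧ ContinuedSim step Vev ξ (τ.ext c) (κ.ext δ) := by
  obtain ⟨P, hP, hpost⟩ := h
  refine ⟨(hpost τ κ hP).1, fun c hc => ?_⟩
  obtain ⟨δ, hVev, hP'⟩ := (hpost τ κ hP).2 c hc
  exact ⟨δ, hVev, P, hP', hpost⟩

theorem ValidInfExec.unfold {τ : FinTrace Cfg} {σ : Stream'.Seq Cfg}
    (h : ValidInfExec step τ σ) :
    (ValidExec step τ ∧ σ = Stream'.Seq.nil) ∨
      ∃ c σ', σ = Stream'.Seq.cons c σ' ∧ ValidExec step τ ∧ step τ.lst c ∧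
        ValidInfExec step (τ.ext c) σ' := by
  obtain ⟨P, hP, hpost⟩ := h
  rcases hpost τ σ hP with hnil | ⟨c, σ', hσ, hvalid, hstep, hP'⟩
  · exact Or.inl hnil
  · exact Or.inr ⟨c, σ', hσ, hvalid, hstep, P, hP', hpost⟩

variable (step Vev ξ)

/-- On `c :: σ'` emit a `δ` keeping `(τ :+ c, κ :+ δ)` in the simulation; the fallback `none`
(no such `δ`) never fires along a valid execution from a simulated pair. -/
noncomputable def refinementStep (s : FinTrace Cfg × FinTrace A × Stream'.Seq Cfg) :
    Option (A × FinTrace Cfg × FinTrace A × Stream'.Seq Cfg) :=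
  open Classical in
  match s.2.2.destruct with
  | none => none
  | some (c, σ') =>
    if h : ∃ δ, ContinuedSim step Vev ξ (s.1.ext c) (s.2.1.ext δ) then
      some (h.choose, s.1.ext c, s.2.1.ext h.choose, σ')
    else none

noncomputable def refinement (τ : FinTrace Cfg) (κ : FinTrace A) (σ : Stream'.Seq Cfg) :
    Stream'.Seq A :=
  Stream'.Seq.corec (refinementStep step Vev ξ) (τ, κ, σ)

variable {step Vev ξ}

theorem refinement_nil (τ : FinTrace Cfg) (κ : FinTrace A) :
    refinement step Vev ξ τ κ Stream'.Seq.nil = Stream'.Seq.nil := by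
  apply Stream'.Seq.destruct_eq_none
  simp only [refinement, Stream'.Seq.corec_eq, refinementStep, Stream'.Seq.destruct_nil]
  rfl

theorem refinement_cons {τ : FinTrace Cfg} {κ : FinTrace A} {c : Cfg} {σ : Stream'.Seq Cfg}
    (h : ∃ δ, ContinuedSim step Vev ξ (τ.ext c) (κ.ext δ)) :
    ∃ δ, ContinuedSim step Vev ξ (τ.ext c) (κ.ext δ) ∧
      refinement step Vev ξ τ κ (Stream'.Seq.cons c σ) =
        Stream'.Seq.cons δ (refinement step Vev ξ (τ.ext c) (κ.ext δ) σ) := by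
  refine ⟨h.choose, h.choose_spec, Stream'.Seq.destruct_eq_cons ?_⟩
  simp only [refinement, Stream'.Seq.corec_eq, refinementStep, Stream'.Seq.destruct_cons,
    dif_pos h]
  rfl

/-- Coinduction with the invariant `continuedsim_ξ(τ, κ) ∧ validinfexec(τ, σ)`. -/
theorem continuedInfSim_refinement {τ : FinTrace Cfg} {κ : FinTrace A} {σ : Stream'.Seq Cfg}
    (hsim : ContinuedSim step Vev ξ τ κ) (hval : ValidInfExec step τ σ) :
    ContinuedInfSim (ContinuedSim step Vev ξ) τ κ σ (refinement step Vev ξ τ κ σ) := by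
  refine ⟨fun τ κ σ μ => ContinuedSim step Vev ξ τ κ ∧ ValidInfExec step τ σ ∧
    μ = refinement step Vev ξ τ κ σ, ⟨hsim, hval, rfl⟩, ?_⟩
  rintro τ κ σ μ ⟨hsim, hval, rfl⟩
  rcases hval.unfold with ⟨-, rfl⟩ | ⟨c, σ', rfl, -, hstep, hval'⟩
  · exact Or.inl ⟨hsim, rfl, refinement_nil τ κ⟩
  · obtain ⟨δ, -, hsim'⟩ := hsim.unfold.2 c hstep
    obtain ⟨δ', hsim'', hμ⟩ := refinement_cons (σ := σ') ⟨δ, hsim'⟩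
    exact Or.inr ⟨c, δ', σ', _, rfl, hμ, hsim'', hsim'', hval', rfl⟩

end Refinement

/-- Possibly-Infinite Refinement: if `continuedsim_ξ(τ, κ)` and `validinfexec(τ, σ)` hold,
then there exists a possibly-infinite trace `μ` over `A` such that
`continuedinfsim_ζ(τ, κ, σ, μ)` holds, where `ζ := continuedsim_ξ`. -/
theorem possibly_infinite_refinement {Cfg A : Type}
    (step : Cfg → Cfg → Prop)
    (Vev : FinTrace Cfg → FinTrace A → Cfg → A → Prop)
    (ξ : FinTrace Cfg → FinTrace A → Prop)
    (τ : FinTrace Cfg) (κ : FinTrace A) (σ : Stream'.Seq Cfg)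
    (hsim : ContinuedSim step Vev ξ τ κ)
    (hval : ValidInfExec step τ σ) :
    ∃ μ : Stream'.Seq A, ContinuedInfSim (ContinuedSim step Vev ξ) τ κ σ μ :=
  ⟨_, continuedInfSim_refinement hsim hval⟩
end

section
/- Consistency of the single-decree Paxos model: if init →SDP* (msgs, maxBal, maxVal) (reflexive-transitive closure of the SDP transition relation starting from the initial state) and both Chosen(msgs, v1) and Chosen(msgs, v2) hold, then v1 = v2. -/
/-- Messages of the single-decree Paxos model. -/
inductive M (A V : Type) where
  | msg1a (b : ℕ)
  | msg1b (a : A) (b : ℕ) (w : Option (ℕ × V))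
  | msg2a (b : ℕ) (v : V)
  | msg2b (a : A) (b : ℕ) (v : V)

/-- An SDP state: sent messages, per-acceptor maximal ballot, per-acceptor last accepted value. -/
abbrev SDPState (A V : Type) := Set (M A V) × (A → Option ℕ) × (A → Option (ℕ × V))

/-- The initial SDP state. -/
def SDPInit (A V : Type) : SDPState A V := (∅, fun _ => none, fun _ => none)

/-- `none <ᵒ b` always; `some b0 <ᵒ b` iff `b0 < b`. -/
def optLT : Option ℕ → ℕ → Prop
  | none, _ => True
  | some b0, b => b0 < b

/-- `none ≤ᵒ b` always; `some b0 ≤ᵒ b` iff `b0 ≤ b`. -/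
def optLE : Option ℕ → ℕ → Prop
  | none, _ => True
  | some b0, b => b0 ≤ b

/-- The 1b-messages with a reported accepted value, for ballot `b` from members of `Q`. -/
def Q1bv {A V : Type} (msgs : Set (M A V)) (Q : Set A) (b : ℕ) : Set (M A V) :=
  { m | m ∈ msgs ∧ ∃ a ∈ Q, ∃ p : ℕ × V, m = M.msg1b a b (some p) }

/-- Every acceptor in `Q` has sent a 1b-message for ballot `b`. -/
def HavePromised {A V : Type} (msgs : Set (M A V)) (Q : Set A) (b : ℕ) : Prop :=
  ∀ a ∈ Q, ∃ w, M.msg1b a b w ∈ msgs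

/-- `v` is the value with maximal reported ballot among the 1b-messages for `b` from `Q`. -/
def IsMaxVote {A V : Type} (msgs : Set (M A V)) (Q : Set A) (b : ℕ) (v : V) : Prop :=
  ∃ (a0 : A) (b0 : ℕ),
    M.msg1b a0 b (some (b0, v)) ∈ Q1bv msgs Q b ∧
    ∀ m' ∈ Q1bv msgs Q b, ∃ a' b' v', m' = M.msg1b a' b (some (b', v')) ∧ b' ≤ b0

/-- Proposing `v` at ballot `b` is safe, as witnessed by quorum `Q`. -/
def ShowsSafeAt {A V : Type} (msgs : Set (M A V)) (Q : Set A) (b : ℕ) (v : V) : Prop :=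
  HavePromised msgs Q b ∧ (Q1bv msgs Q b = ∅ ∨ IsMaxVote msgs Q b v)

/-- The transition relation of the single-decree Paxos model. -/
inductive SDPStep {A V : Type} [DecidableEq A] (Quorum : Set A → Prop) :
    SDPState A V → SDPState A V → Prop where
  | phase1a (msgs : Set (M A V)) (mb : A → Option ℕ) (mv : A → Option (ℕ × V)) (b : ℕ) :
      SDPStep Quorum (msgs, mb, mv) (msgs ∪ {M.msg1a b}, mb, mv)
  | phase1b (msgs : Set (M A V)) (mb : A → Option ℕ) (mv : A → Option (ℕ × V))
      (a : A) (b : ℕ)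
      (h1 : M.msg1a b ∈ msgs) (h2 : optLT (mb a) b) :
      SDPStep Quorum (msgs, mb, mv)
        (msgs ∪ {M.msg1b a b (mv a)}, Function.update mb a (some b), mv)
  | phase2a (msgs : Set (M A V)) (mb : A → Option ℕ) (mv : A → Option (ℕ × V))
      (b : ℕ) (v : V) (Q : Set A)
      (h1 : ¬ ∃ v', M.msg2a b v' ∈ msgs) (h2 : Quorum Q)
      (h3 : ShowsSafeAt msgs Q b v) :
      SDPStep Quorum (msgs, mb, mv) (msgs ∪ {M.msg2a b v}, mb, mv)
  | phase2b (msgs : Set (M A V)) (mb : A → Option ℕ) (mv : A → Option (ℕ × V))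
      (a : A) (b : ℕ) (v : V)
      (h1 : M.msg2a b v ∈ msgs) (h2 : optLE (mb a) b) :
      SDPStep Quorum (msgs, mb, mv)
        (msgs ∪ {M.msg2b a b v}, Function.update mb a (some b),
          Function.update mv a (some (b, v)))

/-- A value `v` is chosen: a quorum of acceptors have sent `msg2b` for `v` at some ballot. -/
def Chosen {A V : Type} (Quorum : Set A → Prop) (msgs : Set (M A V)) (v : V) : Prop :=
  ∃ (b : ℕ) (Q : Set A), Quorum Q ∧ ∀ a ∈ Q, M.msg2b a b v ∈ msgs

/-!
The usual Paxos invariant. A `2a` message for `v` at ballot `b` proposes a value that is safe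
at `b`: for every `c < b` some quorum consists of acceptors that either voted for `v` at `c` or
have moved past `c` without voting there. A `1b` message truthfully reports its sender's last
vote below its ballot, and there is at most one `2a` message per ballot. The max-vote rule of
Phase 2a turns the reports of a promising quorum into safety of the proposed value. Once `v1`
is chosen at `b1` and `v2` at `b2 ≥ b1`, the safety of `v2` at `b2` meets the quorum that chose
`v1` in an acceptor that voted at `b1`, which forces `v1 = v2`.
-/

section

variable {A V : Type}

-- Maximal ballots are read in `WithBot ℕ`, where `none = ⊥` and `<ᵒ`, `≤ᵒ` become `<`, `≤`.
lemma optLT_iff_lt {o : WithBot ℕ} {b : ℕ} : optLT o b ↔ o < b := by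
  cases o <;> simp [optLT, Nat.cast_withBot]

lemma optLE_iff_le {o : WithBot ℕ} {b : ℕ} : optLE o b ↔ o ≤ b := by
  cases o <;> simp [optLE, Nat.cast_withBot]

def WontVoteIn (msgs : Set (M A V)) (mb : A → WithBot ℕ) (a : A) (c : ℕ) : Prop :=
  (c : WithBot ℕ) < mb a ∧ ∀ v, M.msg2b a c v ∉ msgs

def SafeAt (Quorum : Set A → Prop) (msgs : Set (M A V)) (mb : A → WithBot ℕ) (b : ℕ)
    (v : V) : Prop :=
  ∀ c < b, ∃ Q, Quorum Q ∧ ∀ a ∈ Q, M.msg2b a c v ∈ msgs ∨ WontVoteIn msgs mb a c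

def IsLastVoteBelow (msgs : Set (M A V)) (a : A) (b : ℕ) (w : Option (ℕ × V)) : Prop :=
  (∀ p ∈ w, p.1 < b ∧ M.msg2b a p.1 p.2 ∈ msgs) ∧
    ∀ c < b, ∀ v, M.msg2b a c v ∈ msgs → ∃ p ∈ w, c ≤ p.1

lemma IsLastVoteBelow.mono {msgs msgs' : Set (M A V)} {a : A} {b : ℕ} {w : Option (ℕ × V)}
    (hsub : msgs ⊆ msgs')
    (hnew : ∀ c v, M.msg2b a c v ∈ msgs' → M.msg2b a c v ∈ msgs ∨ b ≤ c)
    (h : IsLastVoteBelow msgs a b w) : IsLastVoteBelow msgs' a b w := by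
  refine ⟨fun p hp => ⟨(h.1 p hp).1, hsub (h.1 p hp).2⟩, fun c hc v hv => ?_⟩
  rcases hnew c v hv with hold | hbc
  · exact h.2 c hc v hold
  · omega

lemma exists_quorum_votedFor_or_wontVoteIn {Quorum : Set A → Prop} {msgs : Set (M A V)}
    {mb : A → WithBot ℕ} {Q : Set A} {c : ℕ} {v : V} (hQ : Quorum Q)
    (hc : ∀ a ∈ Q, (c : WithBot ℕ) < mb a)
    (hvotes : ∀ a ∈ Q, ∀ v', M.msg2b a c v' ∈ msgs → v' = v) :
    ∃ Q, Quorum Q ∧ ∀ a ∈ Q, M.msg2b a c v ∈ msgs ∨ WontVoteIn msgs mb a c := by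
  refine ⟨Q, hQ, fun a ha => ?_⟩
  by_cases hvoted : ∃ v', M.msg2b a c v' ∈ msgs
  · obtain ⟨v', hv'⟩ := hvoted
    exact Or.inl (hvotes a ha v' hv' ▸ hv')
  · exact Or.inr ⟨hc a ha, fun v' hv' => hvoted ⟨v', hv'⟩⟩

-- Every step grows the state in this sense, and everything a sent message promises survives it.
structure Grows (msgs msgs' : Set (M A V)) (mb mb' : A → WithBot ℕ) : Prop where
  subset : msgs ⊆ msgs'
  maxBal_le : ∀ a, mb a ≤ mb' a
  new_vote : ∀ a c v, M.msg2b a c v ∈ msgs' → M.msg2b a c v ∈ msgs ∨ mb a ≤ c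

namespace Grows

variable {Quorum : Set A → Prop} {msgs msgs' : Set (M A V)} {mb mb' : A → WithBot ℕ}

lemma wontVoteIn (hg : Grows msgs msgs' mb mb') {a : A} {c : ℕ}
    (h : WontVoteIn msgs mb a c) : WontVoteIn msgs' mb' a c := by
  refine ⟨h.1.trans_le (hg.maxBal_le a), fun v hv => ?_⟩
  rcases hg.new_vote a c v hv with hold | hle
  · exact h.2 v hold
  · exact (h.1.trans_le hle).false

lemma safeAt (hg : Grows msgs msgs' mb mb') {b : ℕ} {v : V}
    (h : SafeAt Quorum msgs mb b v) : SafeAt Quorum msgs' mb' b v := by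
  intro c hc
  obtain ⟨Q, hQ, hQv⟩ := h c hc
  exact ⟨Q, hQ, fun a ha => (hQv a ha).imp (@hg.subset _) hg.wontVoteIn⟩

lemma isLastVoteBelow (hg : Grows msgs msgs' mb mb') {a : A} {b : ℕ} {w : Option (ℕ × V)}
    (hb : (b : WithBot ℕ) ≤ mb a) (h : IsLastVoteBelow msgs a b w) :
    IsLastVoteBelow msgs' a b w :=
  h.mono hg.subset fun c v hv =>
    (hg.new_vote a c v hv).imp_right fun hc => Nat.cast_le.1 (hb.trans hc)

lemma union_of_not_vote {m : M A V} (hm : ∀ a c v, m ≠ M.msg2b a c v)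
    (hmb : ∀ a, mb a ≤ mb' a) :
    Grows msgs (msgs ∪ {m}) mb mb' :=
  ⟨Set.subset_union_left, hmb, fun a c v hv => Or.inl (hv.resolve_right (hm a c v).symm)⟩

end Grows

lemma IsLastVoteBelow.union_of_not_vote {msgs : Set (M A V)} {m : M A V}
    (hm : ∀ a c v, m ≠ M.msg2b a c v) {a : A} {b : ℕ} {w : Option (ℕ × V)}
    (h : IsLastVoteBelow msgs a b w) : IsLastVoteBelow (msgs ∪ {m}) a b w :=
  h.mono Set.subset_union_left fun c v hv => Or.inl (hv.resolve_right (hm a c v).symm)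

def MsgInv (Quorum : Set A → Prop) (msgs : Set (M A V)) (mb : A → WithBot ℕ) : M A V → Prop
  | .msg1a _ => True
  | .msg1b a b w => (b : WithBot ℕ) ≤ mb a ∧ IsLastVoteBelow msgs a b w
  | .msg2a b v => SafeAt Quorum msgs mb b v
  | .msg2b a c v => M.msg2a c v ∈ msgs ∧ (c : WithBot ℕ) ≤ mb a

lemma Grows.msgInv {Quorum : Set A → Prop} {msgs msgs' : Set (M A V)} {mb mb' : A → WithBot ℕ}
    (hg : Grows msgs msgs' mb mb') {m : M A V} (h : MsgInv Quorum msgs mb m) :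
    MsgInv Quorum msgs' mb' m := by
  cases m with
  | msg1a => trivial
  | msg1b a b w => exact ⟨h.1.trans (hg.maxBal_le a), hg.isLastVoteBelow h.1 h.2⟩
  | msg2a b v => exact hg.safeAt h
  | msg2b a c v => exact ⟨hg.subset h.1, h.2.trans (hg.maxBal_le a)⟩

structure SDPInv (Quorum : Set A → Prop) (msgs : Set (M A V)) (mb : A → WithBot ℕ)
    (mv : A → Option (ℕ × V)) : Prop where
  msgInv : ∀ m ∈ msgs, MsgInv Quorum msgs mb m
  msg2a_unique : ∀ b v v', M.msg2a b v ∈ msgs → M.msg2a b v' ∈ msgs → v = v'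
  -- `mv a` is the last vote of `a`, which never votes above `mb a`.
  maxVal : ∀ a (b : ℕ), mb a < b → IsLastVoteBelow msgs a b (mv a)

namespace SDPInv

variable {Quorum : Set A → Prop} {msgs : Set (M A V)} {mb : A → WithBot ℕ}
  {mv : A → Option (ℕ × V)}

lemma vote_eq (hinv : SDPInv Quorum msgs mb mv) {a a' : A} {c : ℕ} {v v' : V}
    (h : M.msg2b a c v ∈ msgs) (h' : M.msg2b a' c v' ∈ msgs) : v = v' :=
  hinv.msg2a_unique c v v' (hinv.msgInv _ h).1 (hinv.msgInv _ h').1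

lemma safeAt_of_vote (hinv : SDPInv Quorum msgs mb mv) {a : A} {c : ℕ} {v : V}
    (h : M.msg2b a c v ∈ msgs) : SafeAt Quorum msgs mb c v :=
  hinv.msgInv _ (hinv.msgInv _ h).1

lemma safeAt_of_showsSafeAt (hinv : SDPInv Quorum msgs mb mv) {Q : Set A} {b : ℕ} {v : V}
    (hQ : Quorum Q) (h : ShowsSafeAt msgs Q b v) : SafeAt Quorum msgs mb b v := by
  obtain ⟨hprom, hcase⟩ := h
  have hreport : ∀ a ∈ Q, ∃ w, M.msg1b a b w ∈ msgs ∧ (b : WithBot ℕ) ≤ mb a ∧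
      IsLastVoteBelow msgs a b w := fun a ha =>
    let ⟨w, hw⟩ := hprom a ha
    ⟨w, hw, hinv.msgInv _ hw⟩
  intro c hc
  have hcQ : ∀ a ∈ Q, (c : WithBot ℕ) < mb a := fun a ha =>
    let ⟨_, _, hb, _⟩ := hreport a ha
    (Nat.cast_lt.2 hc).trans_le hb
  rcases hcase with hempty | ⟨a0, b0, ⟨h0, -⟩, hmax⟩
  · refine exists_quorum_votedFor_or_wontVoteIn hQ hcQ fun a ha v' hv' => ?_
    obtain ⟨w, hw, -, -, hlast⟩ := hreport a ha
    obtain ⟨p, rfl, -⟩ := hlast c hc v' hv'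
    have : M.msg1b a b (some p) ∈ Q1bv msgs Q b := ⟨hw, a, ha, p, rfl⟩
    simp [hempty] at this
  -- `a0` voted `v` at `b0`, so `v` is safe below `b0`; from `b0` on, the only votes of `Q`
  -- below `b` are at `b0` itself, and they agree with that of `a0`.
  · obtain ⟨-, hvote0⟩ := (hinv.msgInv _ h0).2.1 (b0, v) rfl
    rcases lt_or_ge c b0 with hcb0 | hb0c
    · exact hinv.safeAt_of_vote hvote0 c hcb0
    refine exists_quorum_votedFor_or_wontVoteIn hQ hcQ fun a ha v' hv' => ?_
    obtain ⟨w, hw, -, -, hlast⟩ := hreport a ha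
    obtain ⟨p, rfl, hcp⟩ := hlast c hc v' hv'
    obtain ⟨_, b', _, heq, hb'⟩ := hmax _ ⟨hw, a, ha, p, rfl⟩
    simp only [M.msg1b.injEq, Option.some.injEq, true_and] at heq
    obtain rfl : c = b0 := by rw [heq.2] at hcp; omega
    exact hinv.vote_eq hv' hvote0

lemma union_singleton (hinv : SDPInv Quorum msgs mb mv) {m : M A V} {mb' : A → WithBot ℕ}
    {mv' : A → Option (ℕ × V)} (hg : Grows msgs (msgs ∪ {m}) mb mb')
    (hm : MsgInv Quorum (msgs ∪ {m}) mb' m)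
    (huniq : ∀ b v v', M.msg2a b v = m → M.msg2a b v' ∈ msgs → v = v')
    (hmv : ∀ a (b : ℕ), mb' a < b → IsLastVoteBelow (msgs ∪ {m}) a b (mv' a)) :
    SDPInv Quorum (msgs ∪ {m}) mb' mv' where
  msgInv m' hm' := by
    rcases hm' with hold | rfl
    · exact hg.msgInv (hinv.msgInv m' hold)
    · exact hm
  msg2a_unique b v v' h h' := by
    rcases h with h | h <;> rcases h' with h' | h'
    · exact hinv.msg2a_unique b v v' h h'
    · exact (huniq b v' v h' h).symm
    · exact huniq b v v' h h'
    · simpa using h.trans h'.symm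
  maxVal := hmv

lemma init : SDPInv Quorum (∅ : Set (M A V)) (fun _ => ⊥) (fun _ => none) where
  msgInv _ h := h.elim
  msg2a_unique _ _ _ h := h.elim
  maxVal _ _ _ := ⟨by simp, by simp⟩

lemma phase1a (hinv : SDPInv Quorum msgs mb mv) (b : ℕ) :
    SDPInv Quorum (msgs ∪ {M.msg1a b}) mb mv :=
  hinv.union_singleton (.union_of_not_vote (by simp) fun _ => le_rfl) trivial (by simp)
    fun a b' h => (hinv.maxVal a b' h).union_of_not_vote (by simp)

lemma phase1b [DecidableEq A] (hinv : SDPInv Quorum msgs mb mv) {a : A} {b : ℕ}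
    (hb : mb a < b) :
    SDPInv Quorum (msgs ∪ {M.msg1b a b (mv a)}) (Function.update mb a b) mv := by
  have hg : Grows msgs (msgs ∪ {M.msg1b a b (mv a)}) mb (Function.update mb a b) := by
    refine .union_of_not_vote (by simp) fun a' => ?_
    rcases eq_or_ne a' a with rfl | ha
    · simpa using hb.le
    · simp [ha]
  refine hinv.union_singleton hg ⟨by simp, ?_⟩ (by simp) fun a' b' h => ?_
  · exact (hinv.maxVal a b hb).union_of_not_vote (by simp)
  · exact (hinv.maxVal a' b' ((hg.maxBal_le a').trans_lt h)).union_of_not_vote (by simp)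

lemma phase2a (hinv : SDPInv Quorum msgs mb mv) {b : ℕ} {v : V} {Q : Set A}
    (hfresh : ¬ ∃ v', M.msg2a b v' ∈ msgs) (hQ : Quorum Q) (hsafe : ShowsSafeAt msgs Q b v) :
    SDPInv Quorum (msgs ∪ {M.msg2a b v}) mb mv := by
  have hg : Grows msgs (msgs ∪ {M.msg2a b v}) mb mb :=
    .union_of_not_vote (by simp) fun _ => le_rfl
  refine hinv.union_singleton hg (hg.safeAt (hinv.safeAt_of_showsSafeAt hQ hsafe)) ?_
    fun a b' h => (hinv.maxVal a b' h).union_of_not_vote (by simp)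
  rintro b' v' v'' h h'
  simp only [M.msg2a.injEq] at h
  obtain ⟨rfl, rfl⟩ := h
  exact absurd ⟨v'', h'⟩ hfresh

lemma phase2b [DecidableEq A] (hinv : SDPInv Quorum msgs mb mv) {a : A} {b : ℕ} {v : V}
    (h2a : M.msg2a b v ∈ msgs) (hb : mb a ≤ b) :
    SDPInv Quorum (msgs ∪ {M.msg2b a b v}) (Function.update mb a b)
      (Function.update mv a (some (b, v))) := by
  have hg : Grows msgs (msgs ∪ {M.msg2b a b v}) mb (Function.update mb a b) := by
    refine ⟨Set.subset_union_left, fun a' => ?_, fun a' c v' hv => ?_⟩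
    · rcases eq_or_ne a' a with rfl | ha
      · simpa using hb
      · simp [ha]
    · rcases hv with hold | hnew
      · exact Or.inl hold
      · simp only [Set.mem_singleton_iff, M.msg2b.injEq] at hnew
        obtain ⟨rfl, rfl, -⟩ := hnew
        exact Or.inr hb
  refine hinv.union_singleton hg ⟨Or.inl h2a, by simp⟩ (by simp) fun a' b' h => ?_
  rcases eq_or_ne a' a with rfl | ha
  · simp only [Function.update_self] at h ⊢
    refine ⟨by simpa using h, fun c _ v' hv => ⟨(b, v), rfl, ?_⟩⟩
    rcases hv with hold | hnew
    · exact Nat.cast_le.1 ((hinv.msgInv _ hold).2.trans hb)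
    · simp only [Set.mem_singleton_iff, M.msg2b.injEq] at hnew
      exact hnew.2.1.le
  · simp only [Function.update_of_ne ha] at h ⊢
    refine (hinv.maxVal a' b' h).mono Set.subset_union_left fun c v' hv => Or.inl ?_
    simpa [ha] using hv

lemma step [DecidableEq A] {s s' : SDPState A V} (hstep : SDPStep Quorum s s')
    (hinv : SDPInv Quorum s.1 s.2.1 s.2.2) : SDPInv Quorum s'.1 s'.2.1 s'.2.2 := by
  cases hstep with
  | phase1a => exact hinv.phase1a _
  | phase1b _ _ _ _ _ _ hb => exact hinv.phase1b (optLT_iff_lt.1 hb)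
  | phase2a _ _ _ _ _ _ hfresh hQ hsafe => exact hinv.phase2a hfresh hQ hsafe
  | phase2b _ _ _ _ _ _ h2a hb => exact hinv.phase2b h2a (optLE_iff_le.1 hb)

lemma of_reachable [DecidableEq A] {s : SDPState A V}
    (h : Relation.ReflTransGen (SDPStep Quorum) (SDPInit A V) s) :
    SDPInv Quorum s.1 s.2.1 s.2.2 := by
  induction h with
  | refl => exact init
  | tail _ hstep ih => exact ih.step hstep

lemma eq_of_safeAt (hinv : SDPInv Quorum msgs mb mv)
    (hinter : ∀ Q1 Q2 : Set A, Quorum Q1 → Quorum Q2 → ∃ a, a ∈ Q1 ∧ a ∈ Q2)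
    {b c : ℕ} {u v : V} {Q : Set A}
    (hsafe : SafeAt Quorum msgs mb b v) (hc : c < b) (hQ : Quorum Q)
    (hvotes : ∀ a ∈ Q, M.msg2b a c u ∈ msgs) : u = v := by
  obtain ⟨Q', hQ', hQ'v⟩ := hsafe c hc
  obtain ⟨a, ha, ha'⟩ := hinter Q Q' hQ hQ'
  rcases hQ'v a ha' with hv | ⟨-, hnone⟩
  · exact hinv.vote_eq (hvotes a ha) hv
  · exact absurd (hvotes a ha) (hnone u)

lemma eq_of_chosenAt_le (hinv : SDPInv Quorum msgs mb mv)
    (hinter : ∀ Q1 Q2 : Set A, Quorum Q1 → Quorum Q2 → ∃ a, a ∈ Q1 ∧ a ∈ Q2)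
    {b1 b2 : ℕ} {Q1 Q2 : Set A} {v1 v2 : V} (hle : b1 ≤ b2)
    (hQ1 : Quorum Q1) (hv1 : ∀ a ∈ Q1, M.msg2b a b1 v1 ∈ msgs)
    (hQ2 : Quorum Q2) (hv2 : ∀ a ∈ Q2, M.msg2b a b2 v2 ∈ msgs) : v1 = v2 := by
  obtain ⟨a, ha1, ha2⟩ := hinter Q1 Q2 hQ1 hQ2
  rcases hle.lt_or_eq with hlt | rfl
  · exact hinv.eq_of_safeAt hinter (hinv.safeAt_of_vote (hv2 a ha2)) hlt hQ1 hv1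
  · exact hinv.vote_eq (hv1 a ha1) (hv2 a ha2)

lemma eq_of_chosen (hinv : SDPInv Quorum msgs mb mv)
    (hinter : ∀ Q1 Q2 : Set A, Quorum Q1 → Quorum Q2 → ∃ a, a ∈ Q1 ∧ a ∈ Q2)
    {v1 v2 : V}
    (h1 : Chosen Quorum msgs v1) (h2 : Chosen Quorum msgs v2) : v1 = v2 := by
  obtain ⟨b1, Q1, hQ1, hv1⟩ := h1
  obtain ⟨b2, Q2, hQ2, hv2⟩ := h2
  rcases le_total b1 b2 with hle | hle
  · exact hinv.eq_of_chosenAt_le hinter hle hQ1 hv1 hQ2 hv2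
  · exact (hinv.eq_of_chosenAt_le hinter hle hQ2 hv2 hQ1 hv1).symm

end SDPInv

end

/-- Consistency of the single-decree Paxos model: if a state is reachable from the initial
state and both `v1` and `v2` are chosen, then `v1 = v2`. -/
theorem sdp_consistency {A V : Type} [DecidableEq A] (Quorum : Set A → Prop)
    (hQ : ∀ Q1 Q2 : Set A, Quorum Q1 → Quorum Q2 → ∃ a, a ∈ Q1 ∧ a ∈ Q2)
    (msgs : Set (M A V)) (maxBal : A → Option ℕ) (maxVal : A → Option (ℕ × V))
    (v1 v2 : V)
    (hreach : Relation.ReflTransGen (SDPStep Quorum) (SDPInit A V) (msgs, maxBal, maxVal))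
    (h1 : Chosen Quorum msgs v1) (h2 : Chosen Quorum msgs v2) :
    v1 = v2 :=
  (SDPInv.of_reachable hreach).eq_of_chosen hQ h1 h2
end

section
/- Refinement of the lifted Paxos model: if initL →SDPL* (ctr, s) (reflexive-transitive closure of the lifted transition relation starting from the lifted initial state), then init →SDP* s. -/
/-- The transition relation of the lifted single-decree Paxos model over `n` proposers. -/
inductive SDPLStep {A V : Type} [DecidableEq A] (Quorum : Set A → Prop) (n : ℕ) :
    ((Fin n → ℕ) × SDPState A V) → ((Fin n → ℕ) × SDPState A V) → Prop where
  | inc (ctr : Fin n → ℕ) (s : SDPState A V) (p : Fin n) :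
      SDPLStep Quorum n (ctr, s) (Function.update ctr p (ctr p + 1), s)
  | ruleA (ctr : Fin n → ℕ) (msgs : Set (M A V)) (mb : A → Option ℕ)
      (mv : A → Option (ℕ × V)) (m : M A V) (p : Fin n) (k : ℕ)
      (hstep : SDPStep Quorum (msgs, mb, mv) (msgs ∪ {m}, mb, mv))
      (hk : ctr p = k)
      (hm : m = M.msg1a (k * n + p.val) ∨ ∃ v, m = M.msg2a (k * n + p.val) v) :
      SDPLStep Quorum n (ctr, (msgs, mb, mv)) (ctr, (msgs ∪ {m}, mb, mv))
  | ruleB (ctr : Fin n → ℕ) (msgs : Set (M A V)) (mb mb' : A → Option ℕ)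
      (mv mv' : A → Option (ℕ × V)) (m : M A V)
      (hstep : SDPStep Quorum (msgs, mb, mv) (msgs ∪ {m}, mb', mv'))
      (hm : (∃ a b w, m = M.msg1b a b w) ∨ (∃ a b v, m = M.msg2b a b v)) :
      SDPLStep Quorum n (ctr, (msgs, mb, mv)) (ctr, (msgs ∪ {m}, mb', mv'))

/-- The initial state of the lifted single-decree Paxos model. -/
def SDPLInit (A V : Type) (n : ℕ) : (Fin n → ℕ) × SDPState A V :=
  (fun _ => 0, SDPInit A V)

theorem SDPLStep.reflTransGen_snd {A V : Type} [DecidableEq A] {Quorum : Set A → Prop} {n : ℕ}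
    {x y : (Fin n → ℕ) × SDPState A V} (h : SDPLStep Quorum n x y) :
    Relation.ReflTransGen (SDPStep Quorum) x.2 y.2 := by
  cases h with
  | inc => exact .refl
  | ruleA _ _ _ _ _ _ _ hstep => exact .single hstep
  | ruleB _ _ _ _ _ _ _ hstep => exact .single hstep

theorem sdpl_refinement_general {A V : Type} [DecidableEq A] (Quorum : Set A → Prop)
    (n : ℕ) (ctr : Fin n → ℕ) (s : SDPState A V)
    (hreach : Relation.ReflTransGen (SDPLStep Quorum n) (SDPLInit A V n) (ctr, s)) :
    Relation.ReflTransGen (SDPStep Quorum) (SDPInit A V) s :=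
  Relation.ReflTransGen.lift' Prod.snd (fun _ _ h => h.reflTransGen_snd) _ _ hreach

/-- Refinement of the lifted Paxos model: any SDP state reachable in the lifted model from
the lifted initial state is reachable in the SDP model from the initial state. -/
theorem sdpl_refinement {A V : Type} [DecidableEq A] (Quorum : Set A → Prop)
    (n : ℕ) (hn : 0 < n) (ctr : Fin n → ℕ) (s : SDPState A V)
    (hreach : Relation.ReflTransGen (SDPLStep Quorum n) (SDPLInit A V n) (ctr, s)) :
    Relation.ReflTransGen (SDPStep Quorum) (SDPInit A V) s :=
  sdpl_refinement_general Quorum n ctr s hreach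
end

section
/- Per-ballot invariants of the single-decree Paxos model: if init →SDP* (msgs, maxBal, maxVal), then (i) for every ballot b, if msg2a b v ∈ msgs and msg2a b v' ∈ msgs then v = v'; (ii) if msg2b a b v ∈ msgs then msg2a b v ∈ msgs. Consequently, if msg2b a1 b v1 ∈ msgs and msg2b a2 b v2 ∈ msgs (same ballot b), then v1 = v2. -/
structure PerBallotInv {A V : Type} (msgs : Set (M A V)) : Prop where
  msg2a_unique : ∀ (b : ℕ) (v v' : V), M.msg2a b v ∈ msgs → M.msg2a b v' ∈ msgs → v = v'
  msg2a_of_msg2b : ∀ (a : A) (b : ℕ) (v : V), M.msg2b a b v ∈ msgs → M.msg2a b v ∈ msgs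

namespace PerBallotInv

variable {A V : Type} {msgs : Set (M A V)}

theorem empty : PerBallotInv (∅ : Set (M A V)) :=
  ⟨fun _ _ _ h => absurd h (Set.notMem_empty _), fun _ _ _ h => absurd h (Set.notMem_empty _)⟩

theorem msg2b_unique (h : PerBallotInv msgs) {a₁ a₂ : A} {b : ℕ} {v₁ v₂ : V}
    (h₁ : M.msg2b a₁ b v₁ ∈ msgs) (h₂ : M.msg2b a₂ b v₂ ∈ msgs) : v₁ = v₂ :=
  h.msg2a_unique b v₁ v₂ (h.msg2a_of_msg2b a₁ b v₁ h₁) (h.msg2a_of_msg2b a₂ b v₂ h₂)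

theorem union_of_ne (h : PerBallotInv msgs) {m : M A V}
    (h2a : ∀ b v, m ≠ M.msg2a b v) (h2b : ∀ a b v, m ≠ M.msg2b a b v) :
    PerBallotInv (msgs ∪ {m}) := by
  have old2a : ∀ {b v}, M.msg2a b v ∈ msgs ∪ {m} → M.msg2a b v ∈ msgs :=
    fun hm => hm.resolve_right fun he => h2a _ _ he.symm
  refine ⟨fun b v v' hv hv' => h.msg2a_unique b v v' (old2a hv) (old2a hv'), ?_⟩
  intro a b v hm
  exact Or.inl (h.msg2a_of_msg2b a b v (hm.resolve_right fun he => h2b _ _ _ he.symm))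

theorem union_msg2a (h : PerBallotInv msgs) {b : ℕ} {v : V}
    (hfresh : ¬ ∃ v', M.msg2a b v' ∈ msgs) : PerBallotInv (msgs ∪ {M.msg2a b v}) := by
  have new2a : ∀ {b' w}, M.msg2a b' w ∈ msgs ∪ {M.msg2a b v} →
      M.msg2a b' w ∈ msgs ∨ b' = b ∧ w = v := by
    intro b' w hm
    simpa only [Set.mem_union, Set.mem_singleton_iff, M.msg2a.injEq] using hm
  constructor
  · intro b' w w' hw hw'
    rcases new2a hw with hold | ⟨rfl, rfl⟩
    · rcases new2a hw' with hold' | ⟨rfl, rfl⟩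
      · exact h.msg2a_unique _ _ _ hold hold'
      · exact absurd ⟨w, hold⟩ hfresh
    · rcases new2a hw' with hold' | ⟨-, rfl⟩
      · exact absurd ⟨w', hold'⟩ hfresh
      · rfl
  · intro a b' w hm
    refine Or.inl (h.msg2a_of_msg2b a b' w (hm.resolve_right ?_))
    simp

theorem union_msg2b (h : PerBallotInv msgs) {a : A} {b : ℕ} {v : V}
    (hprop : M.msg2a b v ∈ msgs) : PerBallotInv (msgs ∪ {M.msg2b a b v}) := by
  constructor
  · intro b' w w' hw hw'
    refine h.msg2a_unique b' w w' (hw.resolve_right ?_) (hw'.resolve_right ?_) <;> simp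
  · intro a' b' w hm
    rcases hm with hm | hm
    · exact Or.inl (h.msg2a_of_msg2b a' b' w hm)
    · obtain ⟨-, rfl, rfl⟩ := M.msg2b.inj hm
      exact Or.inl hprop

theorem of_step {Quorum : Set A → Prop} [DecidableEq A] {s t : SDPState A V}
    (hs : PerBallotInv s.1) (hst : SDPStep Quorum s t) : PerBallotInv t.1 := by
  cases hst with
  | phase1a => exact hs.union_of_ne (by simp) (by simp)
  | phase1b => exact hs.union_of_ne (by simp) (by simp)
  | phase2a _ _ _ _ _ _ hfresh => exact hs.union_msg2a hfresh
  | phase2b _ _ _ _ _ _ hprop => exact hs.union_msg2b hprop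

theorem of_reachable {Quorum : Set A → Prop} [DecidableEq A] {s : SDPState A V}
    (hreach : Relation.ReflTransGen (SDPStep Quorum) (SDPInit A V) s) : PerBallotInv s.1 := by
  induction hreach with
  | refl => exact empty
  | tail _ hst ih => exact ih.of_step hst

end PerBallotInv

/-- Per-ballot invariants of the single-decree Paxos model: in any reachable state,
(i) at most one value is 2a-proposed per ballot; (ii) every accepted (`msg2b`) value was
proposed (`msg2a`); consequently any two `msg2b` messages for the same ballot carry the
same value. -/
theorem sdp_per_ballot_invariants {A V : Type} [DecidableEq A] (Quorum : Set A → Prop)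
    (msgs : Set (M A V)) (maxBal : A → Option ℕ) (maxVal : A → Option (ℕ × V))
    (hreach : Relation.ReflTransGen (SDPStep Quorum) (SDPInit A V) (msgs, maxBal, maxVal)) :
    (∀ (b : ℕ) (v v' : V), M.msg2a b v ∈ msgs → M.msg2a b v' ∈ msgs → v = v') ∧
    (∀ (a : A) (b : ℕ) (v : V), M.msg2b a b v ∈ msgs → M.msg2a b v ∈ msgs) ∧
    (∀ (a1 a2 : A) (b : ℕ) (v1 v2 : V),
      M.msg2b a1 b v1 ∈ msgs → M.msg2b a2 b v2 ∈ msgs → v1 = v2) := by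
  have inv := PerBallotInv.of_reachable hreach
  exact ⟨inv.msg2a_unique, inv.msg2a_of_msg2b, fun _ _ _ _ _ h₁ h₂ => inv.msg2b_unique h₁ h₂⟩
end

section
/- Eventual consistency of the G-Counter model: for every GC-valid pair (τ, μ) of a finite trace τ and a possibly-infinite trace μ of G-Counter model states, if ModelFair(τ, μ) holds then ModelEvCons(τ, μ) holds, i.e., for every vector v, a stability point for v implies a convergence point for v. -/
/-- A G-Counter model state over `n` replicas: row `δ i` is replica `i`'s local vector. -/
abbrev GCState (n : ℕ) := Fin n → Fin n → ℕ

/-- Pointwise order on vectors. -/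
def vle {n : ℕ} (u v : Fin n → ℕ) : Prop := ∀ l, u l ≤ v l

/-- Pointwise maximum of vectors. -/
def vsup {n : ℕ} (u v : Fin n → ℕ) : Fin n → ℕ := fun l => max (u l) (v l)

/-- The transition relation of the G-Counter model. -/
inductive GCStep (n : ℕ) : GCState n → GCState n → Prop where
  | incr (δ : GCState n) (i : Fin n) :
      GCStep n δ (Function.update δ i (Function.update (δ i) i (δ i i + 1)))
  | apply (δ : GCState n) (i j : Fin n) (v : Fin n → ℕ) (h : vle v (δ j)) :
      GCStep n δ (Function.update δ i (vsup (δ i) v))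

/-- `unroll k τ μ`: the finite trace `τ` with the first `k` elements of the
possibly-infinite trace `μ` appended (or all of `μ` if it has fewer than `k` elements). -/
def unroll {X : Type} (k : ℕ) (τ : FinTrace X) (μ : Stream'.Seq X) : FinTrace X :=
  ⟨τ.head, τ.tail ++ Stream'.Seq.take k μ⟩

/-- `(τ, μ)` is GC-valid: any two consecutive states of the combined sequence (the states
of `τ` followed by those of `μ`) are equal or related by a G-Counter step. -/
def GCValid (n : ℕ) (τ : FinTrace (GCState n)) (μ : Stream'.Seq (GCState n)) : Prop :=
  ∀ k, List.Chain' (fun a b => a = b ∨ GCStep n a b)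
    ((unroll k τ μ).head :: (unroll k τ μ).tail)

/-- Model fairness: the current state of replica `i` is always eventually merged into
replica `j`. -/
def ModelFair (n : ℕ) (τ : FinTrace (GCState n)) (μ : Stream'.Seq (GCState n)) : Prop :=
  ∀ (i j : Fin n) (k : ℕ), ∃ k', vle ((unroll k τ μ).lst i) ((unroll k' τ μ).lst j)

/-- A stability point for `v`: from some point on, the diagonal is exactly `v`. -/
def ModelStab (n : ℕ) (v : Fin n → ℕ)
    (τ : FinTrace (GCState n)) (μ : Stream'.Seq (GCState n)) : Prop :=
  ∃ k, ∀ (k' : ℕ) (i : Fin n), (unroll (k + k') τ μ).lst i i = v i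

/-- A convergence point for `v`: from some point on, every local state is exactly `v`. -/
def ModelConv (n : ℕ) (v : Fin n → ℕ)
    (τ : FinTrace (GCState n)) (μ : Stream'.Seq (GCState n)) : Prop :=
  ∃ k, ∀ (k' : ℕ) (i : Fin n), (unroll (k + k') τ μ).lst i = v

/-- Eventual consistency: every stability point yields a convergence point. -/
def ModelEvCons (n : ℕ) (τ : FinTrace (GCState n)) (μ : Stream'.Seq (GCState n)) : Prop :=
  ∀ v : Fin n → ℕ, ModelStab n v τ μ → ModelConv n v τ μ

/-!
Local states only grow along a valid trace. Once the diagonal is stable at `v`, fairness bounds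
every entry `δ i l` by a later diagonal entry `δ l l = v l`, and conversely merges the stable
value `v l` of replica `l` into every replica `i`; so each entry eventually equals `v l`.
-/

open Filter

theorem Stream'.Seq.take_succ {α : Type*} (k : ℕ) (μ : Seq α) :
    μ.take (k + 1) = μ.take k ++ (μ.get? k).toList := by
  induction k generalizing μ with
  | zero => cases μ using recOn <;> simp
  | succ k ih =>
    cases μ using recOn with
    | nil => simp
    | cons x s => rw [take_succ_cons, take_succ_cons, ih, get?_cons_succ, List.cons_append]

theorem FinTrace.getLast?_eq_lst {X : Type} (t : FinTrace X) :
    (t.head :: t.tail).getLast? = some t.lst :=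
  List.getLast?_cons

theorem unroll_succ {X : Type} (k : ℕ) (τ : FinTrace X) (μ : Stream'.Seq X) :
    unroll (k + 1) τ μ = ⟨τ.head, (unroll k τ μ).tail ++ (μ.get? k).toList⟩ := by
  simp [unroll, Stream'.Seq.take_succ]

section Chain

variable {X : Type} {R : X → X → Prop} {τ : FinTrace X} {μ : Stream'.Seq X}

theorem lst_unroll_succ_eq_or_rel
    (hchain : ∀ k, List.IsChain R ((unroll k τ μ).head :: (unroll k τ μ).tail)) (k : ℕ) :
    (unroll (k + 1) τ μ).lst = (unroll k τ μ).lst ∨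
      R (unroll k τ μ).lst (unroll (k + 1) τ μ).lst := by
  cases hget : μ.get? k with
  | none => left; rw [unroll_succ, hget, Option.toList_none, List.append_nil]; rfl
  | some x =>
    have hsucc : unroll (k + 1) τ μ = ⟨τ.head, (unroll k τ μ).tail ++ [x]⟩ := by
      rw [unroll_succ, hget]; rfl
    have hlst : (unroll (k + 1) τ μ).lst = x := by
      simp [hsucc, FinTrace.lst]
    have hsplit := hchain (k + 1)
    rw [hsucc, ← List.cons_append, List.isChain_append] at hsplit
    exact Or.inr (hlst ▸ hsplit.2.2 _ (unroll k τ μ).getLast?_eq_lst x rfl)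

theorem monotone_lst_unroll [Preorder X] (hR : ∀ a b, R a b → a ≤ b)
    (hchain : ∀ k, List.IsChain R ((unroll k τ μ).head :: (unroll k τ μ).tail)) :
    Monotone fun k => (unroll k τ μ).lst := by
  refine monotone_nat_of_le_succ fun k => ?_
  rcases lst_unroll_succ_eq_or_rel hchain k with heq | hrel
  · exact heq.ge
  · exact hR _ _ hrel

end Chain

theorem GCStep.le {n : ℕ} {a b : GCState n} (h : GCStep n a b) : a ≤ b := by
  intro i l
  cases h with
  | incr j => by_cases hij : i = j <;> by_cases hl : l = j <;> simp [hij, hl]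
  | apply j _ w _ => by_cases hij : i = j <;> simp [vsup, hij]

section Model

variable {n : ℕ} {v : Fin n → ℕ} {τ : FinTrace (GCState n)} {μ : Stream'.Seq (GCState n)}

theorem GCValid.monotone (hvalid : GCValid n τ μ) : Monotone fun k => (unroll k τ μ).lst :=
  monotone_lst_unroll (fun _ _ h => h.elim le_of_eq GCStep.le) hvalid

theorem ModelStab.eventually (hstab : ModelStab n v τ μ) :
    ∀ᶠ k in atTop, ∀ i, (unroll k τ μ).lst i i = v i := by
  obtain ⟨k₀, hk₀⟩ := hstab
  filter_upwards [eventually_ge_atTop k₀] with k hk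
  simpa [Nat.add_sub_cancel' hk] using hk₀ (k - k₀)

theorem ModelConv.of_eventually (h : ∀ᶠ k in atTop, ∀ i, (unroll k τ μ).lst i = v) :
    ModelConv n v τ μ := by
  obtain ⟨K, hK⟩ := eventually_atTop.mp h
  exact ⟨K, fun k' => hK _ (Nat.le_add_right K k')⟩

variable (hvalid : GCValid n τ μ) (hfair : ModelFair n τ μ)
  (hdiag : ∀ᶠ k in atTop, ∀ i, (unroll k τ μ).lst i i = v i)
include hvalid hfair hdiag

theorem lst_unroll_le_of_eventually_diag (k : ℕ) (i l : Fin n) :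
    (unroll k τ μ).lst i l ≤ v l := by
  obtain ⟨k', hk'⟩ := hfair i l k
  obtain ⟨K, hK⟩ := eventually_atTop.mp hdiag
  calc (unroll k τ μ).lst i l ≤ (unroll k' τ μ).lst l l := hk' l
    _ ≤ (unroll (max k' K) τ μ).lst l l := hvalid.monotone (le_max_left k' K) l l
    _ = v l := hK _ (le_max_right k' K) l

theorem eventually_le_lst_unroll_of_eventually_diag (i l : Fin n) :
    ∀ᶠ k in atTop, v l ≤ (unroll k τ μ).lst i l := by
  obtain ⟨K, hK⟩ := eventually_atTop.mp hdiag
  obtain ⟨k', hk'⟩ := hfair l i K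
  filter_upwards [eventually_ge_atTop k'] with k hk
  calc v l = (unroll K τ μ).lst l l := (hK K le_rfl l).symm
    _ ≤ (unroll k' τ μ).lst i l := hk' l
    _ ≤ (unroll k τ μ).lst i l := hvalid.monotone hk i l

end Model

/-- Eventual consistency of the G-Counter model: every GC-valid, model-fair pair of traces
is eventually consistent. -/
theorem gcounter_model_eventual_consistency (n : ℕ)
    (τ : FinTrace (GCState n)) (μ : Stream'.Seq (GCState n))
    (hvalid : GCValid n τ μ) (hfair : ModelFair n τ μ) :
    ModelEvCons n τ μ := by
  intro v hstab
  have hdiag := hstab.eventually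
  have hlower : ∀ᶠ k in atTop, ∀ i l, v l ≤ (unroll k τ μ).lst i l :=
    eventually_all.2 fun i => eventually_all.2 fun l =>
      eventually_le_lst_unroll_of_eventually_diag hvalid hfair hdiag i l
  refine ModelConv.of_eventually (hlower.mono fun k hk i => funext fun l => ?_)
  exact le_antisymm (lst_unroll_le_of_eventually_diag hvalid hfair hdiag k i l) (hk i l)
end

section
/- Diagonal-domination invariant of the G-Counter model: if δ0 →GC* δ, where δ0 is the all-zero matrix and →GC* is the reflexive-transitive closure of the G-Counter transition relation, then for all replicas i and j, δ i j ≤ δ j j (every replica's view of replica j's count never exceeds replica j's own count). -/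
namespace GCState

variable {n : ℕ}

def DiagDominated (δ : GCState n) : Prop := ∀ i j, δ i j ≤ δ j j

theorem diagDominated_zero : DiagDominated (fun _ _ => 0 : GCState n) :=
  fun _ _ => le_rfl

theorem DiagDominated.update {δ : GCState n} (hδ : DiagDominated δ) {k : Fin n}
    {r : Fin n → ℕ} (hgrow : δ k ≤ r) (hbound : ∀ l, l ≠ k → r l ≤ δ l l) :
    DiagDominated (Function.update δ k r) := by
  intro i j
  rcases eq_or_ne k i with rfl | hik <;> rcases eq_or_ne k j with rfl | hjk
  · exact le_rfl
  · simpa [hjk.symm] using hbound j hjk.symm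
  · simpa [hik.symm] using (hδ i k).trans (hgrow k)
  · simpa [hik.symm, hjk.symm] using hδ i j

theorem DiagDominated.of_step {δ δ' : GCState n} (hδ : DiagDominated δ) (h : GCStep n δ δ') :
    DiagDominated δ' := by
  cases h with
  | incr i =>
    refine hδ.update (le_update_self_iff.mpr (Nat.le_succ _)) fun l hl => ?_
    simpa [Function.update_of_ne hl] using hδ i l
  | apply i j v hv =>
    exact hδ.update (fun l => le_max_left _ _) fun l _ => max_le (hδ i l) ((hv l).trans (hδ j l))

end GCState

/-- Diagonal-domination invariant of the G-Counter model: in any state reachable from the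
all-zero matrix, every replica's view of replica `j`'s count never exceeds replica `j`'s
own count. -/
theorem gcounter_diagonal_domination (n : ℕ) (δ : GCState n)
    (hreach : Relation.ReflTransGen (GCStep n) (fun _ _ => 0) δ) :
    ∀ i j : Fin n, δ i j ≤ δ j j := by
  induction hreach with
  | refl => exact GCState.diagDominated_zero
  | tail _ hstep ih => exact GCState.DiagDominated.of_step ih hstep
end

section
/- Local fair-termination criterion is correct: if a fairness model is locally fairly terminating, then it is fairly terminating (every fair run is finite). -/
/-- A fairness model: a labeled transition system over states `S` and roles `R`, with an
enabled-roles map `ER` that (i) approximates the outgoing labels and (ii) does not disable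
other roles along transitions. -/
structure FairnessModel (S R : Type) where
  step : S → R → S → Prop
  ER : S → Finset R
  step_enabled : ∀ ⦃s ρ s'⦄, step s ρ s' → ρ ∈ ER s
  enabled_mono : ∀ ⦃s ρ s'⦄, step s ρ s' → ∀ ρ', ρ' ≠ ρ → ρ' ∈ ER s → ρ' ∈ ER s'

/-- An infinite run of a fairness model: an infinite sequence of consecutive labeled
transitions. -/
def InfRun {S R : Type} (M : FairnessModel S R) (st : ℕ → S) (lb : ℕ → R) : Prop :=
  ∀ n, M.step (st n) (lb n) (st (n + 1))

/-- An infinite run is fair if every role enabled at any point is eventually taken. -/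
def FairInfRun {S R : Type} (M : FairnessModel S R) (st : ℕ → S) (lb : ℕ → R) : Prop :=
  ∀ n ρ, ρ ∈ M.ER (st n) → ∃ m, n ≤ m ∧ lb m = ρ

/-- A model is fairly terminating if every fair run is finite, i.e., there is no fair
infinite run (finite runs are always fair). -/
def FairlyTerminating {S R : Type} (M : FairnessModel S R) : Prop :=
  ∀ st lb, InfRun M st lb → ¬ FairInfRun M st lb

/-- A model is locally fairly terminating if there are a partial order on states whose
strict part is well-founded and a map `π` from states to roles such that: (1) every
transition is non-increasing; (2) at every non-dead-end state `s`, `π s` is enabled and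
every `π s`-transition strictly decreases; (3) transitions labeled by other roles preserve
`π`. -/
def LocallyFairlyTerminating {S R : Type} (M : FairnessModel S R) : Prop :=
  ∃ le : S → S → Prop, IsPartialOrder S le ∧
    WellFounded (fun a b => le a b ∧ a ≠ b) ∧
    ∃ π : S → R,
      (∀ s ρ s', M.step s ρ s' → le s' s) ∧
      (∀ s, (∃ ρ s', M.step s ρ s') →
        π s ∈ M.ER s ∧ ∀ s', M.step s (π s) s' → le s' s ∧ s' ≠ s) ∧
      (∀ s ρ s', M.step s ρ s' → ρ ≠ π s → π s' = π s)

/-!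
Along an infinite run the states form a non-increasing chain, so by well-foundedness they are
eventually constant, equal to some `s`. The run is infinite, so `s` is not a dead end and `π s` is
enabled there; fairness then forces a `π s`-transition out of `s` later on, which strictly
decreases the state, contradicting constancy.
-/

theorem WellFounded.exists_eventually_eq_of_antitone {α : Type*} {le : α → α → Prop}
    [IsPreorder α le] (hwf : WellFounded fun a b => le a b ∧ a ≠ b) {f : ℕ → α}
    (hf : ∀ n, le (f (n + 1)) (f n)) : ∃ N, ∀ n, N ≤ n → f n = f N := by
  obtain ⟨_, ⟨N, rfl⟩, hmin⟩ := hwf.has_min (Set.range f) ⟨f 0, 0, rfl⟩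
  refine ⟨N, fun n hn => by_contra fun hne => hmin (f n) ⟨n, rfl⟩ ⟨?_, hne⟩⟩
  exact Nat.rel_of_forall_rel_succ_of_le (Function.swap le) hf hn

/-- The local fair-termination criterion is correct: a locally fairly terminating fairness
model is fairly terminating. -/
theorem locally_fairly_terminating_correct {S R : Type} (M : FairnessModel S R)
    (h : LocallyFairlyTerminating M) : FairlyTerminating M := by
  obtain ⟨le, hpo, hwf, π, hstep_le, hprogress, -⟩ := h
  intro st lb hrun hfair
  obtain ⟨N, hconst⟩ := hwf.exists_eventually_eq_of_antitone fun n => hstep_le _ _ _ (hrun n)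
  obtain ⟨henabled, hdecr⟩ := hprogress (st N) ⟨lb N, st (N + 1), hrun N⟩
  obtain ⟨m, hNm, hlb⟩ := hfair N (π (st N)) henabled
  have hstep : M.step (st N) (π (st N)) (st (m + 1)) := by
    simpa only [hconst m hNm, hlb] using hrun m
  exact (hdecr _ hstep).2 (hconst (m + 1) (by omega))
end
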